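/- arXiv:2508.17663 — 4 statements merged into one kernel-verified Lean document; each statement's English description precedes it below -/
import Mathlib

section
/- Let P be a joint pmf on A × B, and for each (i,j) let w_{ij} be a probability mass function on a finite set Z and f : Z → ℝ_{>0}. Define Q(i,j) = P_A(i) P_B(j) Σ_z w_{ij}(z) f(z) (assumed a pmf). Then D_KL(P‖Q) ≤ I_P[a;b] − Σ_{i,j} P(i,j) Σ_z w_{ij}(z) log f(z). -/
open Real Finset

/-- Jensen-inequality step: `D_KL(P‖Q) ≤ I_P[a;b] − Σ_{ij} P(i,j) Σ_z w_{ij}(z) log f(z)`. -/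
theorem kl_le_mi_sub_jensen {A B Z : Type*} [Fintype A] [Fintype B] [Fintype Z]
    (P : A × B → ℝ) (w : A → B → Z → ℝ) (f : Z → ℝ)
    (hP : ∀ p, 0 < P p) (hPs : ∑ p : A × B, P p = 1)
    (hw : ∀ i j z, 0 ≤ w i j z) (hws : ∀ i j, ∑ z : Z, w i j z = 1)
    (hf : ∀ z, 0 < f z)
    (PA : A → ℝ) (PB : B → ℝ)
    (hPA : ∀ i, PA i = ∑ j : B, P (i, j))
    (hPB : ∀ j, PB j = ∑ i : A, P (i, j))
    (Q : A × B → ℝ)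
    (hQ : ∀ i j, Q (i, j) = PA i * PB j * ∑ z : Z, w i j z * f z)
    (hQs : ∑ p : A × B, Q p = 1) :
    (∑ i : A, ∑ j : B, P (i, j) * Real.log (P (i, j) / Q (i, j)))
      ≤ (∑ i : A, ∑ j : B, P (i, j) * Real.log (P (i, j) / (PA i * PB j)))
        - ∑ i : A, ∑ j : B, P (i, j) * ∑ z : Z, w i j z * Real.log (f z) := by
  rw [← Finset.sum_sub_distrib]
  refine Finset.sum_le_sum fun i _ => ?_
  rw [← Finset.sum_sub_distrib]
  refine Finset.sum_le_sum fun j _ => ?_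
  have : Nonempty A := ⟨i⟩
  have : Nonempty B := ⟨j⟩
  have hPA' : 0 < PA i := by
    rw [hPA]; exact Finset.sum_pos (fun j _ => hP _) Finset.univ_nonempty
  have hPB' : 0 < PB j := by
    rw [hPB]; exact Finset.sum_pos (fun i _ => hP _) Finset.univ_nonempty
  have hS : 0 < ∑ z : Z, w i j z * f z := by
    by_contra h
    push_neg at h
    have hle : ∑ z : Z, w i j z * f z = 0 :=
      le_antisymm h (Finset.sum_nonneg fun z _ => mul_nonneg (hw i j z) (hf z).le)
    have := hws i j
    have hz : ∀ z ∈ Finset.univ, w i j z * f z = 0 :=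
      (Finset.sum_eq_zero_iff_of_nonneg
        (fun z _ => mul_nonneg (hw i j z) (hf z).le)).mp hle
    have : (1:ℝ) = 0 := by
      rw [← hws i j]
      refine Finset.sum_eq_zero fun z _ => ?_
      have := hz z (Finset.mem_univ z)
      rcases mul_eq_zero.mp this with h' | h'
      · exact h'
      · exact absurd h' (hf z).ne'
    norm_num at this
  -- Jensen: Σ w log f ≤ log (Σ w f)
  have hJ : ∑ z : Z, w i j z * Real.log (f z) ≤ Real.log (∑ z : Z, w i j z * f z) := by
    have := (strictConcaveOn_log_Ioi.concaveOn).le_map_sum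
      (t := Finset.univ) (w := w i j) (p := f)
      (fun z _ => hw i j z) (hws i j) (fun z _ => Set.mem_Ioi.mpr (hf z))
    simpa [smul_eq_mul] using this
  have hlogQ : Real.log (P (i, j) / Q (i, j))
      = Real.log (P (i, j) / (PA i * PB j)) - Real.log (∑ z : Z, w i j z * f z) := by
    rw [hQ, Real.log_div (hP _).ne' (by positivity),
      Real.log_div (hP _).ne' (by positivity), Real.log_mul (by positivity) hS.ne']
    ring
  rw [hlogQ, mul_sub]
  have := mul_le_mul_of_nonneg_left hJ (hP (i, j)).le
  linarith
end

section
/- (Discrete Lemma 1) In the setting of row-stochastic latent kernels: let Q(i,j) = P_A(i) P_B(j) Σ_{u,v} k_A(i,u) k_B(j,v) q(u,v)/(p_U(u) p_V(v)), assumed to be a pmf. Then D_KL(P‖Q) ≤ I_P[a;b] − I_p[u;v] + D_KL(p‖q). -/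
open Real Finset

/-- Discrete Lemma 1: `D_KL(P‖Q) ≤ I_P[a;b] − I_p[u;v] + D_KL(p‖q)`. -/
theorem discrete_lemma1
    {A B U V : Type*} [Fintype A] [Fintype B] [Fintype U] [Fintype V]
    (P : A × B → ℝ) (kA : A → U → ℝ) (kB : B → V → ℝ) (q : U × V → ℝ)
    (hP : ∀ p, 0 < P p) (hPs : ∑ p : A × B, P p = 1)
    (hkA : ∀ i u, 0 ≤ kA i u) (hkAs : ∀ i, ∑ u : U, kA i u = 1)
    (hkB : ∀ j v, 0 ≤ kB j v) (hkBs : ∀ j, ∑ v : V, kB j v = 1)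
    (hq : ∀ x, 0 < q x) (hqs : ∑ x : U × V, q x = 1)
    (PA : A → ℝ) (PB : B → ℝ)
    (hPA : ∀ i, PA i = ∑ j : B, P (i, j))
    (hPB : ∀ j, PB j = ∑ i : A, P (i, j))
    (p : U × V → ℝ)
    (hp : ∀ u v, p (u, v) = ∑ i : A, ∑ j : B, P (i, j) * kA i u * kB j v)
    (pU : U → ℝ) (pV : V → ℝ)
    (hpU : ∀ u, pU u = ∑ v : V, p (u, v))
    (hpV : ∀ v, pV v = ∑ u : U, p (u, v))
    (hppos : ∀ x : U × V, 0 < p x)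
    (Q : A × B → ℝ)
    (hQ : ∀ i j, Q (i, j) = PA i * PB j *
        ∑ u : U, ∑ v : V, kA i u * kB j v * (q (u, v) / (pU u * pV v)))
    (hQs : ∑ x : A × B, Q x = 1) :
    (∑ i : A, ∑ j : B, P (i, j) * Real.log (P (i, j) / Q (i, j)))
      ≤ (∑ i : A, ∑ j : B, P (i, j) * Real.log (P (i, j) / (PA i * PB j)))
        - (∑ u : U, ∑ v : V, p (u, v) * Real.log (p (u, v) / (pU u * pV v)))
        + ∑ u : U, ∑ v : V, p (u, v) * Real.log (p (u, v) / q (u, v)) := by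
  classical
  -- nonemptiness
  have hABne : Nonempty (A × B) := by
    rcases isEmpty_or_nonempty (A × B) with h | h
    · rw [Finset.univ_eq_empty, Finset.sum_empty] at hPs; norm_num at hPs
    · exact h
  have hUVne : Nonempty (U × V) := by
    rcases isEmpty_or_nonempty (U × V) with h | h
    · rw [Finset.univ_eq_empty, Finset.sum_empty] at hqs; norm_num at hqs
    · exact h
  have hAne : Nonempty A := ⟨hABne.some.1⟩
  have hBne : Nonempty B := ⟨hABne.some.2⟩
  have hUne : Nonempty U := ⟨hUVne.some.1⟩
  have hVne : Nonempty V := ⟨hUVne.some.2⟩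
  have hPApos : ∀ i, 0 < PA i := fun i => by
    rw [hPA]; exact Finset.sum_pos (fun j _ => hP _) Finset.univ_nonempty
  have hPBpos : ∀ j, 0 < PB j := fun j => by
    rw [hPB]; exact Finset.sum_pos (fun i _ => hP _) Finset.univ_nonempty
  have hpUpos : ∀ u, 0 < pU u := fun u => by
    rw [hpU]; exact Finset.sum_pos (fun v _ => hppos _) Finset.univ_nonempty
  have hpVpos : ∀ v, 0 < pV v := fun v => by
    rw [hpV]; exact Finset.sum_pos (fun u _ => hppos _) Finset.univ_nonempty
  set r : U × V → ℝ := fun x => q x / (pU x.1 * pV x.2) with hr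
  have hrpos : ∀ x, 0 < r x := fun x =>
    div_pos (hq x) (mul_pos (hpUpos _) (hpVpos _))
  set S : A → B → ℝ := fun i j => ∑ x : U × V, kA i x.1 * kB j x.2 * r x with hS
  have hQeq : ∀ i j, Q (i, j) = PA i * PB j * S i j := by
    intro i j
    rw [hQ]
    congr 1
    exact (Fintype.sum_prod_type (f := fun x : U × V => kA i x.1 * kB j x.2 * r x)).symm
  have hkAex : ∀ i, ∃ u, 0 < kA i u := by
    intro i
    by_contra h
    push_neg at h
    have h0 : ∑ u : U, kA i u = 0 :=
      Finset.sum_eq_zero (fun u _ => le_antisymm (h u) (hkA i u))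
    rw [hkAs i] at h0; norm_num at h0
  have hkBex : ∀ j, ∃ v, 0 < kB j v := by
    intro j
    by_contra h
    push_neg at h
    have h0 : ∑ v : V, kB j v = 0 :=
      Finset.sum_eq_zero (fun v _ => le_antisymm (h v) (hkB j v))
    rw [hkBs j] at h0; norm_num at h0
  have hSpos : ∀ i j, 0 < S i j := by
    intro i j
    obtain ⟨u0, hu0⟩ := hkAex i
    obtain ⟨v0, hv0⟩ := hkBex j
    have hterm : 0 < kA i u0 * kB j v0 * r (u0, v0) :=
      mul_pos (mul_pos hu0 hv0) (hrpos _)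
    have hle : kA i u0 * kB j v0 * r (u0, v0) ≤ S i j :=
      Finset.single_le_sum
        (f := fun x : U × V => kA i x.1 * kB j x.2 * r x)
        (fun x _ => mul_nonneg (mul_nonneg (hkA _ _) (hkB _ _)) (hrpos x).le)
        (Finset.mem_univ (u0, v0))
    linarith
  -- Jensen
  have jensen : ∀ i j,
      (∑ x : U × V, (kA i x.1 * kB j x.2) * Real.log (r x)) ≤ Real.log (S i j) := by
    intro i j
    have hws : ∑ x : U × V, kA i x.1 * kB j x.2 = 1 := by
      rw [Fintype.sum_prod_type]
      simp only [← Finset.mul_sum, hkBs, mul_one]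
      exact hkAs i
    have h := strictConcaveOn_log_Ioi.concaveOn.le_map_sum
      (t := (Finset.univ : Finset (U × V)))
      (w := fun x : U × V => kA i x.1 * kB j x.2)
      (p := r)
      (fun x _ => mul_nonneg (hkA _ _) (hkB _ _)) hws
      (fun x _ => Set.mem_Ioi.mpr (hrpos x))
    simpa [smul_eq_mul] using h
  -- expand p pointwise
  have hpx : ∀ x : U × V, p x * Real.log (r x)
      = ∑ i : A, ∑ j : B, P (i, j) * ((kA i x.1 * kB j x.2) * Real.log (r x)) := by
    intro x
    have h := hp x.1 x.2
    calc p x * Real.log (r x)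
        = (∑ i : A, ∑ j : B, P (i, j) * kA i x.1 * kB j x.2) * Real.log (r x) := by
          rw [← h]
      _ = ∑ i : A, ∑ j : B, P (i, j) * ((kA i x.1 * kB j x.2) * Real.log (r x)) := by
          rw [Finset.sum_mul]
          refine Finset.sum_congr rfl fun i _ => ?_
          rw [Finset.sum_mul]
          exact Finset.sum_congr rfl fun j _ => by ring
  -- key inequality
  have key : ∑ x : U × V, p x * Real.log (r x)
      ≤ ∑ i : A, ∑ j : B, P (i, j) * Real.log (S i j) := by
    calc ∑ x : U × V, p x * Real.log (r x)
        = ∑ x : U × V, ∑ i : A, ∑ j : B,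
            P (i, j) * ((kA i x.1 * kB j x.2) * Real.log (r x)) :=
          Finset.sum_congr rfl fun x _ => hpx x
      _ = ∑ i : A, ∑ x : U × V, ∑ j : B,
            P (i, j) * ((kA i x.1 * kB j x.2) * Real.log (r x)) :=
          Finset.sum_comm
      _ = ∑ i : A, ∑ j : B, ∑ x : U × V,
            P (i, j) * ((kA i x.1 * kB j x.2) * Real.log (r x)) :=
          Finset.sum_congr rfl fun i _ => Finset.sum_comm
      _ = ∑ i : A, ∑ j : B,
            P (i, j) * ∑ x : U × V, (kA i x.1 * kB j x.2) * Real.log (r x) := by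
          simp_rw [Finset.mul_sum]
      _ ≤ ∑ i : A, ∑ j : B, P (i, j) * Real.log (S i j) :=
          Finset.sum_le_sum fun i _ => Finset.sum_le_sum fun j _ =>
            mul_le_mul_of_nonneg_left (jensen i j) (hP _).le
  -- log decompositions
  have hlogQ : ∀ i j, Real.log (P (i, j) / Q (i, j))
      = Real.log (P (i, j) / (PA i * PB j)) - Real.log (S i j) := by
    intro i j
    rw [hQeq i j,
      Real.log_div (hP _).ne' (mul_pos (mul_pos (hPApos i) (hPBpos j)) (hSpos i j)).ne',
      Real.log_div (hP _).ne' (mul_pos (hPApos i) (hPBpos j)).ne',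
      Real.log_mul (mul_pos (hPApos i) (hPBpos j)).ne' (hSpos i j).ne',
      Real.log_mul (hPApos i).ne' (hPBpos j).ne']
    ring
  have hlogp : ∀ x : U × V,
      Real.log (r x)
      = Real.log (p x / (pU x.1 * pV x.2)) - Real.log (p x / q x) := by
    intro x
    show Real.log (q x / (pU x.1 * pV x.2)) = _
    rw [Real.log_div (hq x).ne' (mul_pos (hpUpos x.1) (hpVpos x.2)).ne',
      Real.log_div (hppos x).ne' (hq x).ne',
      Real.log_div (hppos x).ne' (mul_pos (hpUpos x.1) (hpVpos x.2)).ne']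
    ring
  -- assemble
  have e1 : (∑ i : A, ∑ j : B, P (i, j) * Real.log (P (i, j) / Q (i, j)))
      = (∑ i : A, ∑ j : B, P (i, j) * Real.log (P (i, j) / (PA i * PB j)))
        - ∑ i : A, ∑ j : B, P (i, j) * Real.log (S i j) := by
    rw [← Finset.sum_sub_distrib]
    refine Finset.sum_congr rfl fun i _ => ?_
    rw [← Finset.sum_sub_distrib]
    refine Finset.sum_congr rfl fun j _ => ?_
    rw [hlogQ i j]; ring
  have e2 : (∑ x : U × V, p x * Real.log (r x))
      = (∑ x : U × V, p x * Real.log (p x / (pU x.1 * pV x.2)))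
        - ∑ x : U × V, p x * Real.log (p x / q x) := by
    rw [← Finset.sum_sub_distrib]
    refine Finset.sum_congr rfl fun x _ => ?_
    rw [hlogp x]; ring
  have e3 : (∑ u : U, ∑ v : V, p (u, v) * Real.log (p (u, v) / (pU u * pV v)))
      = ∑ x : U × V, p x * Real.log (p x / (pU x.1 * pV x.2)) :=
    (Fintype.sum_prod_type (f := fun x : U × V =>
      p x * Real.log (p x / (pU x.1 * pV x.2)))).symm
  have e4 : (∑ u : U, ∑ v : V, p (u, v) * Real.log (p (u, v) / q (u, v)))
      = ∑ x : U × V, p x * Real.log (p x / q x) :=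
    (Fintype.sum_prod_type (f := fun x : U × V =>
      p x * Real.log (p x / q x))).symm
  rw [e1, e3, e4]
  linarith [key, e2]
end

section
/- (Discrete Lemma 3) Let P be a strictly positive joint pmf on finite A × B × C, and k_A, k_B, k_C be row-stochastic kernels into finite latent sets U, V, W. Define p(u,v,w) = Σ_{i,j,k} P(i,j,k) k_A(i,u) k_B(j,v) k_C(k,w), and Q(i,j,k) = P_A(i)P_B(j)P_C(k) Σ_{u,v,w} k_A(i,u)k_B(j,v)k_C(k,w) q(u,v,w)/(p_U(u)p_V(v)p_W(w)) for a strictly positive pmf q, assumed to be a pmf. Then D_KL(P‖Q) ≤ I_P[a;b;c] − I_p[u;v;w] + D_KL(p‖q), where I denotes total correlation. -/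
open Real Finset

/-- Discrete Lemma 3 (three domains):
`D_KL(P‖Q) ≤ I_P[a;b;c] − I_p[u;v;w] + D_KL(p‖q)` with total correlations. -/
theorem discrete_lemma3
    {A B C U V W : Type*} [Fintype A] [Fintype B] [Fintype C]
    [Fintype U] [Fintype V] [Fintype W]
    (P : A × B × C → ℝ) (kA : A → U → ℝ) (kB : B → V → ℝ) (kC : C → W → ℝ)
    (q : U × V × W → ℝ)
    (hP : ∀ p, 0 < P p) (hPs : ∑ p : A × B × C, P p = 1)
    (hkA : ∀ i u, 0 ≤ kA i u) (hkAs : ∀ i, ∑ u : U, kA i u = 1)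
    (hkB : ∀ j v, 0 ≤ kB j v) (hkBs : ∀ j, ∑ v : V, kB j v = 1)
    (hkC : ∀ k w, 0 ≤ kC k w) (hkCs : ∀ k, ∑ w : W, kC k w = 1)
    (hq : ∀ x, 0 < q x) (hqs : ∑ x : U × V × W, q x = 1)
    (PA : A → ℝ) (PB : B → ℝ) (PC : C → ℝ)
    (hPA : ∀ i, PA i = ∑ j : B, ∑ k : C, P (i, j, k))
    (hPB : ∀ j, PB j = ∑ i : A, ∑ k : C, P (i, j, k))
    (hPC : ∀ k, PC k = ∑ i : A, ∑ j : B, P (i, j, k))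
    (p : U × V × W → ℝ)
    (hp : ∀ u v w, p (u, v, w)
        = ∑ i : A, ∑ j : B, ∑ k : C, P (i, j, k) * kA i u * kB j v * kC k w)
    (hppos : ∀ x : U × V × W, 0 < p x)
    (pU : U → ℝ) (pV : V → ℝ) (pW : W → ℝ)
    (hpU : ∀ u, pU u = ∑ v : V, ∑ w : W, p (u, v, w))
    (hpV : ∀ v, pV v = ∑ u : U, ∑ w : W, p (u, v, w))
    (hpW : ∀ w, pW w = ∑ u : U, ∑ v : V, p (u, v, w))
    (Q : A × B × C → ℝ)
    (hQ : ∀ i j k, Q (i, j, k) = PA i * PB j * PC k *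
        ∑ u : U, ∑ v : V, ∑ w : W,
          kA i u * kB j v * kC k w * (q (u, v, w) / (pU u * pV v * pW w)))
    (hQs : ∑ x : A × B × C, Q x = 1) :
    (∑ x : A × B × C, P x * Real.log (P x / Q x))
      ≤ (∑ i : A, ∑ j : B, ∑ k : C,
            P (i, j, k) * Real.log (P (i, j, k) / (PA i * PB j * PC k)))
        - (∑ u : U, ∑ v : V, ∑ w : W,
            p (u, v, w) * Real.log (p (u, v, w) / (pU u * pV v * pW w)))
        + ∑ x : U × V × W, p x * Real.log (p x / q x) := by

  classical
  -- nonemptiness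
  have hneABC : Nonempty (A × B × C) := by
    by_contra h
    rw [not_nonempty_iff] at h
    rw [Finset.univ_eq_empty, Finset.sum_empty] at hPs
    norm_num at hPs
  have hneUVW : Nonempty (U × V × W) := by
    by_contra h
    rw [not_nonempty_iff] at h
    rw [Finset.univ_eq_empty, Finset.sum_empty] at hqs
    norm_num at hqs
  obtain ⟨⟨a0, b0, c0⟩⟩ := hneABC
  obtain ⟨⟨u0, v0, w0⟩⟩ := hneUVW
  haveI : Nonempty A := ⟨a0⟩
  haveI : Nonempty B := ⟨b0⟩
  haveI : Nonempty C := ⟨c0⟩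
  haveI : Nonempty U := ⟨u0⟩
  haveI : Nonempty V := ⟨v0⟩
  haveI : Nonempty W := ⟨w0⟩
  -- positivity of marginals
  have hPApos : ∀ i, 0 < PA i := fun i => by
    rw [hPA]
    exact Finset.sum_pos (fun j _ => Finset.sum_pos (fun k _ => hP _) Finset.univ_nonempty)
      Finset.univ_nonempty
  have hPBpos : ∀ j, 0 < PB j := fun j => by
    rw [hPB]
    exact Finset.sum_pos (fun i _ => Finset.sum_pos (fun k _ => hP _) Finset.univ_nonempty)
      Finset.univ_nonempty
  have hPCpos : ∀ k, 0 < PC k := fun k => by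
    rw [hPC]
    exact Finset.sum_pos (fun i _ => Finset.sum_pos (fun j _ => hP _) Finset.univ_nonempty)
      Finset.univ_nonempty
  have hpUpos : ∀ u, 0 < pU u := fun u => by
    rw [hpU]
    exact Finset.sum_pos (fun v _ => Finset.sum_pos (fun w _ => hppos _) Finset.univ_nonempty)
      Finset.univ_nonempty
  have hpVpos : ∀ v, 0 < pV v := fun v => by
    rw [hpV]
    exact Finset.sum_pos (fun u _ => Finset.sum_pos (fun w _ => hppos _) Finset.univ_nonempty)
      Finset.univ_nonempty
  have hpWpos : ∀ w, 0 < pW w := fun w => by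
    rw [hpW]
    exact Finset.sum_pos (fun u _ => Finset.sum_pos (fun v _ => hppos _) Finset.univ_nonempty)
      Finset.univ_nonempty
  -- abbreviations
  set g : U × V × W → ℝ := fun y => q y / (pU y.1 * pV y.2.1 * pW y.2.2) with hg
  have hgpos : ∀ y, 0 < g y := fun y =>
    div_pos (hq y) (mul_pos (mul_pos (hpUpos _) (hpVpos _)) (hpWpos _))
  set wgt : A × B × C → U × V × W → ℝ :=
    fun x y => kA x.1 y.1 * kB x.2.1 y.2.1 * kC x.2.2 y.2.2 with hwgt
  have hwnn : ∀ x y, 0 ≤ wgt x y := fun x y =>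
    mul_nonneg (mul_nonneg (hkA _ _) (hkB _ _)) (hkC _ _)
  have hwsum : ∀ x : A × B × C, ∑ y : U × V × W, wgt x y = 1 := by
    intro x
    rw [Fintype.sum_prod_type]
    have h : ∀ u : U, ∑ y : V × W, wgt x (u, y) = kA x.1 u := by
      intro u
      rw [Fintype.sum_prod_type]
      have h2 : ∀ v : V, ∑ w : W, wgt x (u, (v, w)) = kA x.1 u * kB x.2.1 v := by
        intro v
        rw [show (∑ w : W, wgt x (u, (v, w)))
              = ∑ w : W, kA x.1 u * kB x.2.1 v * kC x.2.2 w from rfl,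
            ← Finset.mul_sum, hkCs, mul_one]
      rw [Finset.sum_congr rfl (fun v _ => h2 v), ← Finset.mul_sum, hkBs, mul_one]
    rw [Finset.sum_congr rfl (fun u _ => h u), hkAs]
  -- S
  set S : A × B × C → ℝ := fun x => ∑ y : U × V × W, wgt x y * g y with hS
  have hQS : ∀ x : A × B × C, Q x = PA x.1 * PB x.2.1 * PC x.2.2 * S x := by
    rintro ⟨i, j, k⟩
    rw [hQ i j k]
    congr 1
    rw [hS]
    beta_reduce
    symm
    rw [Fintype.sum_prod_type]
    apply Finset.sum_congr rfl; intro u _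
    rw [Fintype.sum_prod_type]
  -- Jensen
  have hjensen : ∀ x : A × B × C,
      ∑ y : U × V × W, wgt x y * Real.log (g y) ≤ Real.log (S x) := by
    intro x
    have := (strictConcaveOn_log_Ioi.concaveOn).le_map_sum
      (t := Finset.univ) (w := wgt x) (p := g)
      (fun y _ => hwnn x y) (hwsum x) (fun y _ => Set.mem_Ioi.mpr (hgpos y))
    simpa [smul_eq_mul] using this
  have hSpos : ∀ x, 0 < S x := by
    intro x
    have h1 : ∀ y ∈ Finset.univ, (0:ℝ) ≤ wgt x y * g y :=
      fun y _ => mul_nonneg (hwnn x y) (hgpos y).le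
    have h2 : ∃ y ∈ Finset.univ, (0:ℝ) < wgt x y * g y := by
      by_contra h
      push_neg at h
      have : ∑ y : U × V × W, wgt x y = 0 := by
        apply Finset.sum_eq_zero
        intro y hy
        have := h y hy
        have hql := hgpos y
        nlinarith [hwnn x y]
      rw [hwsum x] at this
      norm_num at this
    exact Finset.sum_pos' h1 h2
  -- step: p y = ∑ x, P x * wgt x y
  have hpalt : ∀ y : U × V × W, p y = ∑ x : A × B × C, P x * wgt x y := by
    rintro ⟨u, v, w⟩
    rw [hp u v w, Fintype.sum_prod_type]
    apply Finset.sum_congr rfl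
    intro i _
    rw [Fintype.sum_prod_type]
    apply Finset.sum_congr rfl
    intro j _
    apply Finset.sum_congr rfl
    intro k _
    simp [hwgt]
    ring
  -- swap: ∑ x P x * (∑ y wgt x y * log g y) = ∑ y p y * log g y
  have hswap : ∑ x : A × B × C, P x * ∑ y : U × V × W, wgt x y * Real.log (g y)
      = ∑ y : U × V × W, p y * Real.log (g y) := by
    have h1 : ∀ x : A × B × C, P x * ∑ y : U × V × W, wgt x y * Real.log (g y)
        = ∑ y : U × V × W, P x * wgt x y * Real.log (g y) := by
      intro x; rw [Finset.mul_sum]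
      apply Finset.sum_congr rfl; intro y _; ring
    rw [Finset.sum_congr rfl (fun x _ => h1 x), Finset.sum_comm]
    apply Finset.sum_congr rfl; intro y _
    rw [hpalt y, Finset.sum_mul]
  -- decompositions of logs
  have hlogPQ : ∀ x : A × B × C, Real.log (P x / Q x)
      = Real.log (P x / (PA x.1 * PB x.2.1 * PC x.2.2)) - Real.log (S x) := by
    intro x
    rw [hQS x]
    have hm : (0:ℝ) < PA x.1 * PB x.2.1 * PC x.2.2 :=
      mul_pos (mul_pos (hPApos _) (hPBpos _)) (hPCpos _)
    rw [Real.log_div (hP x).ne' (mul_pos hm (hSpos x)).ne',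
        Real.log_div (hP x).ne' hm.ne', Real.log_mul hm.ne' (hSpos x).ne']
    ring
  have hlogg : ∀ y : U × V × W, Real.log (g y)
      = Real.log (p y / (pU y.1 * pV y.2.1 * pW y.2.2)) - Real.log (p y / q y) := by
    intro y
    rw [hg]
    have hm : (0:ℝ) < pU y.1 * pV y.2.1 * pW y.2.2 :=
      mul_pos (mul_pos (hpUpos _) (hpVpos _)) (hpWpos _)
    rw [Real.log_div (hq y).ne' hm.ne', Real.log_div (hppos y).ne' hm.ne',
        Real.log_div (hppos y).ne' (hq y).ne']
    ring
  -- rewrite RHS nested sums as product sums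
  have hRHS1 : (∑ i : A, ∑ j : B, ∑ k : C,
        P (i, j, k) * Real.log (P (i, j, k) / (PA i * PB j * PC k)))
      = ∑ x : A × B × C, P x * Real.log (P x / (PA x.1 * PB x.2.1 * PC x.2.2)) := by
    rw [Fintype.sum_prod_type]
    apply Finset.sum_congr rfl; intro i _
    rw [Fintype.sum_prod_type]
  have hRHS2 : (∑ u : U, ∑ v : V, ∑ w : W,
        p (u, v, w) * Real.log (p (u, v, w) / (pU u * pV v * pW w)))
      = ∑ y : U × V × W, p y * Real.log (p y / (pU y.1 * pV y.2.1 * pW y.2.2)) := by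
    rw [Fintype.sum_prod_type]
    apply Finset.sum_congr rfl; intro u _
    rw [Fintype.sum_prod_type]
  rw [hRHS1, hRHS2]
  -- main chain
  calc ∑ x : A × B × C, P x * Real.log (P x / Q x)
      = ∑ x : A × B × C, (P x * Real.log (P x / (PA x.1 * PB x.2.1 * PC x.2.2))
          - P x * Real.log (S x)) := by
        apply Finset.sum_congr rfl; intro x _; rw [hlogPQ x]; ring
    _ = (∑ x : A × B × C, P x * Real.log (P x / (PA x.1 * PB x.2.1 * PC x.2.2)))
          - ∑ x : A × B × C, P x * Real.log (S x) := Finset.sum_sub_distrib _ _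
    _ ≤ (∑ x : A × B × C, P x * Real.log (P x / (PA x.1 * PB x.2.1 * PC x.2.2)))
          - ∑ x : A × B × C, P x * ∑ y : U × V × W, wgt x y * Real.log (g y) := by
        apply sub_le_sub_left
        apply Finset.sum_le_sum
        intro x _
        exact mul_le_mul_of_nonneg_left (hjensen x) (hP x).le
    _ = (∑ x : A × B × C, P x * Real.log (P x / (PA x.1 * PB x.2.1 * PC x.2.2)))
          - ∑ y : U × V × W, p y * Real.log (g y) := by rw [hswap]
    _ = (∑ x : A × B × C, P x * Real.log (P x / (PA x.1 * PB x.2.1 * PC x.2.2)))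
          - (∑ y : U × V × W, p y * Real.log (p y / (pU y.1 * pV y.2.1 * pW y.2.2)))
          + ∑ y : U × V × W, p y * Real.log (p y / q y) := by
        have h2 : ∑ y : U × V × W, p y * Real.log (g y)
            = (∑ y : U × V × W, p y * Real.log (p y / (pU y.1 * pV y.2.1 * pW y.2.2)))
              - ∑ y : U × V × W, p y * Real.log (p y / q y) := by
          rw [← Finset.sum_sub_distrib]
          apply Finset.sum_congr rfl; intro y _
          rw [hlogg y]; ring
        rw [h2]; ring
end

section
/- For finitely supported random variables with joint pmf over (a, b, u, v) satisfying the Markov structure u ⊥ (b, v) | a and v ⊥ (a, u) | b (i.e., u depends only on a and v depends only on b), the mutual information satisfies I[u;v] ≥ I[u;b] + I[a;v] − I[a;b]. -/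
open Real Finset

private lemma swap23 {α β γ δ : Type*} [Fintype α] [Fintype β] [Fintype γ]
    [AddCommMonoid δ] (f : α → β → γ → δ) :
    ∑ a : α, ∑ b : β, ∑ c : γ, f a b c = ∑ a : α, ∑ c : γ, ∑ b : β, f a b c :=
  Finset.sum_congr rfl (fun _ _ => Finset.sum_comm)

private lemma reord3 {α β γ δ : Type*} [Fintype α] [Fintype β] [Fintype γ]
    [AddCommMonoid δ] (f : α → β → γ → δ) :
    ∑ a : α, ∑ b : β, ∑ c : γ, f a b c = ∑ c : γ, ∑ a : α, ∑ b : β, f a b c :=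
  (swap23 f).trans Finset.sum_comm

private lemma reord4 {α β γ δ ε : Type*} [Fintype α] [Fintype β] [Fintype γ] [Fintype δ]
    [AddCommMonoid ε] (f : α → β → γ → δ → ε) :
    ∑ a : α, ∑ b : β, ∑ c : γ, ∑ d : δ, f a b c d
      = ∑ c : γ, ∑ d : δ, ∑ a : α, ∑ b : β, f a b c d :=
  (reord3 (fun a b c => ∑ d : δ, f a b c d)).trans
    (Finset.sum_congr rfl (fun c _ => reord3 (fun a b d => f a b c d)))

private lemma sum_sum_mul {α β : Type*} [Fintype α] [Fintype β] (f : α → β → ℝ) (c : ℝ) :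
    ∑ a : α, ∑ b : β, f a b * c = (∑ a : α, ∑ b : β, f a b) * c := by
  rw [Finset.sum_mul]
  apply Finset.sum_congr rfl
  intro a _
  rw [Finset.sum_mul]

private lemma reord13 {α β γ δ ε : Type*} [Fintype α] [Fintype β] [Fintype γ] [Fintype δ]
    [AddCommMonoid ε] (f : α → β → γ → δ → ε) :
    ∑ a : α, ∑ b : β, ∑ c : γ, ∑ d : δ, f a b c d
      = ∑ c : γ, ∑ b : β, ∑ a : α, ∑ d : δ, f a b c d :=
  ((swap23 (fun a b c => ∑ d : δ, f a b c d)).trans Finset.sum_comm).trans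
    (Finset.sum_congr rfl (fun c _ => Finset.sum_comm))

/-- Warm-up inequality: under `P(a,b,u,v) = P(a,b) k_A(u|a) k_B(v|b)`,
`I[u;v] ≥ I[u;b] + I[a;v] − I[a;b]`. -/
theorem warmup_mi_inequality
    {A B U V : Type*} [Fintype A] [Fintype B] [Fintype U] [Fintype V]
    (P : A × B → ℝ) (kA : A → U → ℝ) (kB : B → V → ℝ)
    (hP : ∀ p, 0 < P p) (hPs : ∑ p : A × B, P p = 1)
    (hkA : ∀ a u, 0 < kA a u) (hkAs : ∀ a, ∑ u : U, kA a u = 1)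
    (hkB : ∀ b v, 0 < kB b v) (hkBs : ∀ b, ∑ v : V, kB b v = 1)
    (PA : A → ℝ) (PB : B → ℝ)
    (hPA : ∀ a, PA a = ∑ b : B, P (a, b))
    (hPB : ∀ b, PB b = ∑ a : A, P (a, b))
    (pUV : U × V → ℝ)
    (hpUV : ∀ u v, pUV (u, v) = ∑ a : A, ∑ b : B, P (a, b) * kA a u * kB b v)
    (pU : U → ℝ) (pV : V → ℝ)
    (hpU : ∀ u, pU u = ∑ a : A, PA a * kA a u)
    (hpV : ∀ v, pV v = ∑ b : B, PB b * kB b v)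
    (pUB : U → B → ℝ) (pAV : A → V → ℝ)
    (hpUB : ∀ u b, pUB u b = ∑ a : A, P (a, b) * kA a u)
    (hpAV : ∀ a v, pAV a v = ∑ b : B, P (a, b) * kB b v) :
    (∑ u : U, ∑ b : B, pUB u b * Real.log (pUB u b / (pU u * PB b)))
      + (∑ a : A, ∑ v : V, pAV a v * Real.log (pAV a v / (PA a * pV v)))
      - (∑ a : A, ∑ b : B, P (a, b) * Real.log (P (a, b) / (PA a * PB b)))
      ≤ ∑ u : U, ∑ v : V, pUV (u, v) * Real.log (pUV (u, v) / (pU u * pV v)) := by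
  classical
  -- nonemptiness
  have hABne : Nonempty (A × B) := by
    by_contra h
    rw [not_nonempty_iff] at h
    rw [Finset.univ_eq_empty, Finset.sum_empty] at hPs
    norm_num at hPs
  have hA : Nonempty A := ⟨hABne.some.1⟩
  have hB : Nonempty B := ⟨hABne.some.2⟩
  -- positivity of marginals
  have hPApos : ∀ a, 0 < PA a := fun a => by
    rw [hPA]; exact Finset.sum_pos (fun b _ => hP _) Finset.univ_nonempty
  have hPBpos : ∀ b, 0 < PB b := fun b => by
    rw [hPB]; exact Finset.sum_pos (fun a _ => hP _) Finset.univ_nonempty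
  have hpUpos : ∀ u, 0 < pU u := fun u => by
    rw [hpU]
    exact Finset.sum_pos (fun a _ => mul_pos (hPApos a) (hkA a u)) Finset.univ_nonempty
  have hpVpos : ∀ v, 0 < pV v := fun v => by
    rw [hpV]
    exact Finset.sum_pos (fun b _ => mul_pos (hPBpos b) (hkB b v)) Finset.univ_nonempty
  have hpUBpos : ∀ u b, 0 < pUB u b := fun u b => by
    rw [hpUB]
    exact Finset.sum_pos (fun a _ => mul_pos (hP _) (hkA a u)) Finset.univ_nonempty
  have hpAVpos : ∀ a v, 0 < pAV a v := fun a v => by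
    rw [hpAV]
    exact Finset.sum_pos (fun b _ => mul_pos (hP _) (hkB b v)) Finset.univ_nonempty
  have hpUVpos : ∀ u v, 0 < pUV (u, v) := fun u v => by
    rw [hpUV]
    exact Finset.sum_pos
      (fun a _ => Finset.sum_pos
        (fun b _ => mul_pos (mul_pos (hP _) (hkA a u)) (hkB b v)) Finset.univ_nonempty)
      Finset.univ_nonempty
  -- abbreviations
  set Q : A → B → U → V → ℝ := fun a b u v => P (a, b) * kA a u * kB b v with hQ
  set Q' : A → B → U → V → ℝ :=
    fun a b u v => kA a u * kB b v * pUB u b * pAV a v / pUV (u, v) with hQ'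
  have hQpos : ∀ a b u v, 0 < Q a b u v := fun a b u v =>
    mul_pos (mul_pos (hP _) (hkA a u)) (hkB b v)
  have hQ'pos : ∀ a b u v, 0 < Q' a b u v := fun a b u v => by
    have := hpUVpos u v
    have := hpUBpos u b
    have := hpAVpos a v
    have := hkA a u
    have := hkB b v
    positivity
  -- sum of P over A, B
  have hPs' : ∑ a : A, ∑ b : B, P (a, b) = 1 := by
    rw [← hPs, ← Fintype.sum_prod_type]
  -- sum of Q is 1
  have hQsum : ∑ a : A, ∑ b : B, ∑ u : U, ∑ v : V, Q a b u v = 1 := by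
    have h1 : ∀ a b, (∑ u : U, ∑ v : V, Q a b u v) = P (a, b) := by
      intro a b
      have : ∀ u, ∑ v : V, Q a b u v = P (a, b) * kA a u := by
        intro u
        rw [show (∑ v : V, Q a b u v) = (P (a, b) * kA a u) * ∑ v : V, kB b v by
          rw [Finset.mul_sum]]
        rw [hkBs, mul_one]
      simp_rw [this]
      rw [← Finset.mul_sum, hkAs, mul_one]
    simp_rw [h1]
    exact hPs'
  -- sum of pUV is 1
  have hpUVsum : ∑ u : U, ∑ v : V, pUV (u, v) = 1 := by
    have h : ∀ u v, pUV (u, v) = ∑ a : A, ∑ b : B, Q a b u v := fun u v => hpUV u v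
    simp_rw [h]
    rw [← hQsum]
    exact (reord4 (fun a b u v => Q a b u v)).symm
  -- sum of Q' is 1
  have hQ'sum : ∑ a : A, ∑ b : B, ∑ u : U, ∑ v : V, Q' a b u v = 1 := by
    have step : ∀ u v, (∑ a : A, ∑ b : B, Q' a b u v) = pUV (u, v) := by
      intro u v
      have hb : ∀ a, (∑ b : B, Q' a b u v)
          = kA a u * pAV a v * pUV (u, v) / pUV (u, v) := by
        intro a
        have h2 : ∑ b : B, kB b v * pUB u b = pUV (u, v) := by
          simp_rw [hpUB, Finset.mul_sum]
          rw [hpUV, Finset.sum_comm]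
          apply Finset.sum_congr rfl; intro b _
          apply Finset.sum_congr rfl; intro a' _
          ring
        calc (∑ b : B, Q' a b u v)
            = (kA a u * pAV a v / pUV (u, v)) * ∑ b : B, kB b v * pUB u b := by
              rw [Finset.mul_sum]
              apply Finset.sum_congr rfl; intro b _
              simp only [hQ']
              ring
          _ = kA a u * pAV a v * pUV (u, v) / pUV (u, v) := by rw [h2]; ring
      simp_rw [hb]
      have ha : ∑ a : A, kA a u * pAV a v = pUV (u, v) := by
        simp_rw [hpAV, Finset.mul_sum]
        rw [hpUV]
        apply Finset.sum_congr rfl; intro a _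
        apply Finset.sum_congr rfl; intro b _
        ring
      rw [← Finset.sum_div, ← Finset.sum_mul, ha]
      field_simp
    rw [reord4 (fun a b u v => Q' a b u v)]
    simp_rw [step]
    exact hpUVsum
  -- the combined log
  set L : A → B → U → V → ℝ :=
    fun a b u v => Real.log (P (a, b) * pUV (u, v) / (pUB u b * pAV a v)) with hL
  -- pointwise Gibbs bound
  have pt : ∀ a b u v, Q a b u v - Q' a b u v ≤ Q a b u v * L a b u v := by
    intro a b u v
    have hq := hQpos a b u v
    have hq' := hQ'pos a b u v
    have h1 : Real.log (Q' a b u v / Q a b u v) ≤ Q' a b u v / Q a b u v - 1 :=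
      Real.log_le_sub_one_of_pos (by positivity)
    have hratio : P (a, b) * pUV (u, v) / (pUB u b * pAV a v)
        = Q a b u v / Q' a b u v := by
      have hpuv := (hpUVpos u v).ne'
      have hpub := (hpUBpos u b).ne'
      have hpav := (hpAVpos a v).ne'
      have hka := (hkA a u).ne'
      have hkb := (hkB b v).ne'
      simp only [hQ, hQ']
      field_simp
    have hLL : L a b u v = - Real.log (Q' a b u v / Q a b u v) := by
      simp only [hL]
      rw [hratio, ← Real.log_inv, inv_div]
    have h2 : Q a b u v * Real.log (Q' a b u v / Q a b u v)
        ≤ Q a b u v * (Q' a b u v / Q a b u v - 1) :=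
      mul_le_mul_of_nonneg_left h1 hq.le
    have h3 : Q a b u v * (Q' a b u v / Q a b u v - 1) = Q' a b u v - Q a b u v := by
      field_simp
    rw [hLL]
    nlinarith [h2, h3]
  -- total KL nonneg
  have hKL : 0 ≤ ∑ a : A, ∑ b : B, ∑ u : U, ∑ v : V, Q a b u v * L a b u v := by
    have hle : ∑ a : A, ∑ b : B, ∑ u : U, ∑ v : V, (Q a b u v - Q' a b u v)
        ≤ ∑ a : A, ∑ b : B, ∑ u : U, ∑ v : V, Q a b u v * L a b u v := by
      apply Finset.sum_le_sum; intro a _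
      apply Finset.sum_le_sum; intro b _
      apply Finset.sum_le_sum; intro u _
      apply Finset.sum_le_sum; intro v _
      exact pt a b u v
    have heq : ∑ a : A, ∑ b : B, ∑ u : U, ∑ v : V, (Q a b u v - Q' a b u v) = 0 := by
      simp_rw [Finset.sum_sub_distrib]
      rw [hQsum, hQ'sum]; ring
    linarith
  -- unit-sum insertions
  have ins_v : ∀ (x : ℝ) (b : B), x = ∑ v : V, x * kB b v := fun x b => by
    rw [← Finset.mul_sum, hkBs, mul_one]
  have ins_u : ∀ (x : ℝ) (a : A), x = ∑ u : U, x * kA a u := fun x a => by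
    rw [← Finset.mul_sum, hkAs, mul_one]
  -- marginals of Q
  have hmargUV : ∀ u v, ∑ a : A, ∑ b : B, Q a b u v = pUV (u, v) := by
    intro u v
    simp only [hQ]
    exact (hpUV u v).symm
  have hmargUB : ∀ u b, ∑ a : A, ∑ v : V, Q a b u v = pUB u b := by
    intro u b
    simp only [hQ]
    rw [hpUB]
    apply Finset.sum_congr rfl; intro a _
    rw [← Finset.mul_sum, hkBs, mul_one]
  have hmargAV : ∀ a v, ∑ b : B, ∑ u : U, Q a b u v = pAV a v := by
    intro a v
    simp only [hQ]
    rw [hpAV]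
    apply Finset.sum_congr rfl; intro b _
    calc ∑ u : U, P (a, b) * kA a u * kB b v
        = (P (a, b) * kB b v) * ∑ u : U, kA a u := by
          rw [Finset.mul_sum]
          exact Finset.sum_congr rfl (fun u _ => by ring)
      _ = P (a, b) * kB b v := by rw [hkAs, mul_one]
  have hmargAB : ∀ a b, ∑ u : U, ∑ v : V, Q a b u v = P (a, b) := by
    intro a b
    simp only [hQ]
    have h : ∀ u, ∑ v : V, P (a, b) * kA a u * kB b v = P (a, b) * kA a u := fun u => by
      rw [← Finset.mul_sum, hkBs, mul_one]
    simp_rw [h]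
    rw [← Finset.mul_sum, hkAs, mul_one]
  -- X1
  have eX1 : ∑ u : U, ∑ v : V, pUV (u, v) * Real.log (pUV (u, v) / (pU u * pV v))
      = ∑ a : A, ∑ b : B, ∑ u : U, ∑ v : V,
          Q a b u v * Real.log (pUV (u, v) / (pU u * pV v)) := by
    rw [reord4 (fun a b u v => Q a b u v * Real.log (pUV (u, v) / (pU u * pV v)))]
    apply Finset.sum_congr rfl; intro u _
    apply Finset.sum_congr rfl; intro v _
    rw [sum_sum_mul (fun a b => Q a b u v), hmargUV]
  -- X2
  have eX2 : ∑ u : U, ∑ b : B, pUB u b * Real.log (pUB u b / (pU u * PB b))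
      = ∑ a : A, ∑ b : B, ∑ u : U, ∑ v : V,
          Q a b u v * Real.log (pUB u b / (pU u * PB b)) := by
    rw [reord13 (fun a b u v => Q a b u v * Real.log (pUB u b / (pU u * PB b)))]
    apply Finset.sum_congr rfl; intro u _
    apply Finset.sum_congr rfl; intro b _
    rw [sum_sum_mul (fun a v => Q a b u v), hmargUB]
  -- X3
  have eX3 : ∑ a : A, ∑ v : V, pAV a v * Real.log (pAV a v / (PA a * pV v))
      = ∑ a : A, ∑ b : B, ∑ u : U, ∑ v : V,
          Q a b u v * Real.log (pAV a v / (PA a * pV v)) := by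
    apply Finset.sum_congr rfl; intro a _
    rw [reord3 (fun b u v => Q a b u v * Real.log (pAV a v / (PA a * pV v)))]
    apply Finset.sum_congr rfl; intro v _
    rw [sum_sum_mul (fun b u => Q a b u v), hmargAV]
  -- X4
  have eX4 : ∑ a : A, ∑ b : B, P (a, b) * Real.log (P (a, b) / (PA a * PB b))
      = ∑ a : A, ∑ b : B, ∑ u : U, ∑ v : V,
          Q a b u v * Real.log (P (a, b) / (PA a * PB b)) := by
    apply Finset.sum_congr rfl; intro a _
    apply Finset.sum_congr rfl; intro b _
    rw [sum_sum_mul (fun u v => Q a b u v), hmargAB]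
  -- log identity pointwise
  have logid : ∀ a b u v,
      Real.log (pUV (u, v) / (pU u * pV v))
        - Real.log (pUB u b / (pU u * PB b))
        - Real.log (pAV a v / (PA a * pV v))
        + Real.log (P (a, b) / (PA a * PB b)) = L a b u v := by
    intro a b u v
    simp only [hL]
    rw [Real.log_div (hpUVpos u v).ne' (mul_pos (hpUpos u) (hpVpos v)).ne',
        Real.log_div (hpUBpos u b).ne' (mul_pos (hpUpos u) (hPBpos b)).ne',
        Real.log_div (hpAVpos a v).ne' (mul_pos (hPApos a) (hpVpos v)).ne',
        Real.log_div (hP (a, b)).ne' (mul_pos (hPApos a) (hPBpos b)).ne',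
        Real.log_div (mul_pos (hP (a, b)) (hpUVpos u v)).ne'
          (mul_pos (hpUBpos u b) (hpAVpos a v)).ne',
        Real.log_mul (hpUpos u).ne' (hpVpos v).ne',
        Real.log_mul (hpUpos u).ne' (hPBpos b).ne',
        Real.log_mul (hPApos a).ne' (hpVpos v).ne',
        Real.log_mul (hPApos a).ne' (hPBpos b).ne',
        Real.log_mul (hP (a, b)).ne' (hpUVpos u v).ne',
        Real.log_mul (hpUBpos u b).ne' (hpAVpos a v).ne']
    ring
  -- assemble
  have main : ∑ u : U, ∑ v : V, pUV (u, v) * Real.log (pUV (u, v) / (pU u * pV v))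
      - (∑ u : U, ∑ b : B, pUB u b * Real.log (pUB u b / (pU u * PB b)))
      - (∑ a : A, ∑ v : V, pAV a v * Real.log (pAV a v / (PA a * pV v)))
      + (∑ a : A, ∑ b : B, P (a, b) * Real.log (P (a, b) / (PA a * PB b)))
      = ∑ a : A, ∑ b : B, ∑ u : U, ∑ v : V, Q a b u v * L a b u v := by
    rw [eX1, eX2, eX3, eX4]
    simp_rw [← Finset.sum_sub_distrib, ← Finset.sum_add_distrib]
    apply Finset.sum_congr rfl; intro a _
    apply Finset.sum_congr rfl; intro b _
    apply Finset.sum_congr rfl; intro u _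
    apply Finset.sum_congr rfl; intro v _
    linear_combination (Q a b u v) * logid a b u v
  linarith [hKL, main]
end
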